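/- Let a₁, a₂, c₁, c₂, P > 0, B₁ > 0, B₂ > 0 and L > 0 be real numbers (L standing for ‖g₁‖², with L·P appearing as the maximal deliverable jamming power at receiver 1). Define φ(R) = a₁/(2^R − 1) − c₁, m(R) = √(φ(R))/√L, and f_min(R) = log₂(1 + a₂/((m(R)·B₁ + √(P − m(R)²)·B₂)² + c₂)). Define R₁^min = log₂(1 + a₁/(P·L + c₁)), R₁^max = log₂(1 + a₁/c₁), and R₁^MRT2 = log₂(1 + a₁/(P·L·B₁²/(B₁² + B₂²) + c₁)). Then f_min is strictly decreasing on [R₁^min, R₁^MRT2] and strictly increasing on [R₁^MRT2, R₁^max]. (This is Proposition 2 of the paper: the lower boundary curve of the achievable rate region for the two suspicious links first decreases and then increases in R₁, with turning point at the rate achieved by full-power maximum-ratio jamming toward receiver 2.) -/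

import Mathlib

/-!
Let `p(R) = (a₁/(2^R - 1) - c₁)/L` be the power the monitor has to send along `ĝ₁` to hold link 1
at rate `R`, so that `m(R) = √p(R)` and `f_min(R) = h(G(p(R)))`, where
`G(p) = √p B₁ + √(P - p) B₂` is the jamming amplitude at receiver 2 and `h` is strictly decreasing.
The power `p` decreases in `R`, sweeping `[P_MRT, P]` on the first interval and `[0, P_MRT]` on the
second, with `P_MRT = P B₁²/(B₁² + B₂²)`. The function `G` increases on `[0, P_MRT]`: rationalising,
`G(q) - G(p)` has the sign of `B₁ (√(P - p) + √(P - q)) - B₂ (√p + √q)`, which is positive because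
`q ≤ P_MRT` means `B₂ √q ≤ B₁ √(P - q)`. The decrease of `G` on `[P_MRT, P]` is the same statement
with `B₁` and `B₂` exchanged, read through `p ↦ P - p`.
-/

open Real Set

noncomputable section

def jammingAmplitude (B₁ B₂ P p : ℝ) : ℝ := √p * B₁ + √(P - p) * B₂

def requiredJamPower (a c L R : ℝ) : ℝ := (a / (2 ^ R - 1) - c) / L

def jammedRate (a c t : ℝ) : ℝ := logb 2 (1 + a / (t ^ 2 + c))

end

section JammingAmplitude

variable {B₁ B₂ P : ℝ}

lemma jammingAmplitude_nonneg (hB₁ : 0 ≤ B₁) (hB₂ : 0 ≤ B₂) (p : ℝ) :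
    0 ≤ jammingAmplitude B₁ B₂ P p := by
  unfold jammingAmplitude
  positivity

lemma jammingAmplitude_swap (B₁ B₂ P p : ℝ) :
    jammingAmplitude B₂ B₁ P (P - p) = jammingAmplitude B₁ B₂ P p := by
  rw [jammingAmplitude, jammingAmplitude, sub_sub_cancel, add_comm]

lemma jammingAmplitude_strictMonoOn (hB₁ : 0 < B₁) (hB₂ : 0 ≤ B₂) :
    StrictMonoOn (jammingAmplitude B₁ B₂ P) (Icc 0 (P * B₁ ^ 2 / (B₁ ^ 2 + B₂ ^ 2))) := by
  rintro p ⟨hp, -⟩ q ⟨-, hq⟩ hpq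
  rw [le_div_iff₀ (by positivity)] at hq
  have hq0 : 0 < q := hp.trans_lt hpq
  have hPq : 0 ≤ P - q :=
    (mul_nonneg_iff_of_pos_right (by positivity : 0 < B₁ ^ 2)).1 (by nlinarith [sq_nonneg B₂])
  have hsp : 0 ≤ √p := sqrt_nonneg p
  have hsq : 0 < √q := sqrt_pos.2 hq0
  have hPp : 0 < √(P - p) := sqrt_pos.2 (by linarith)
  have hsPq : 0 ≤ √(P - q) := sqrt_nonneg _
  have hcross : B₂ * √q ≤ B₁ * √(P - q) := by
    rw [← pow_le_pow_iff_left₀ (by positivity) (by positivity) two_ne_zero, mul_pow, mul_pow,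
      sq_sqrt hq0.le, sq_sqrt hPq]
    linarith
  have hroots : B₂ * (√p + √q) < B₁ * (√(P - p) + √(P - q)) := by
    nlinarith [mul_le_mul_of_nonneg_left (sqrt_le_sqrt hpq.le) hB₂,
      mul_lt_mul_of_pos_left (sqrt_lt_sqrt hPq (by linarith : P - q < P - p)) hB₁]
  have hfactor : (√p + √q) * (√(P - p) + √(P - q)) *
      (jammingAmplitude B₁ B₂ P q - jammingAmplitude B₁ B₂ P p) =
      (q - p) * (B₁ * (√(P - p) + √(P - q)) - B₂ * (√p + √q)) := by
    unfold jammingAmplitude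
    linear_combination (√(P - p) + √(P - q)) * B₁ * (sq_sqrt hq0.le - sq_sqrt hp)
      - (√p + √q) * B₂ * (sq_sqrt (by linarith : 0 ≤ P - p) - sq_sqrt hPq)
  have hprod := mul_pos (sub_pos.2 hpq) (sub_pos.2 hroots)
  rw [← hfactor] at hprod
  exact sub_pos.1 (pos_of_mul_pos_right hprod (by positivity))

lemma jammingAmplitude_strictAntiOn (hB₁ : 0 ≤ B₁) (hB₂ : 0 < B₂) :
    StrictAntiOn (jammingAmplitude B₁ B₂ P) (Icc (P * B₁ ^ 2 / (B₁ ^ 2 + B₂ ^ 2)) P) := by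
  have hcompl : P - P * B₁ ^ 2 / (B₁ ^ 2 + B₂ ^ 2) = P * B₂ ^ 2 / (B₂ ^ 2 + B₁ ^ 2) := by
    field_simp
    ring
  have hreflect : MapsTo (P - ·) (Icc (P * B₁ ^ 2 / (B₁ ^ 2 + B₂ ^ 2)) P)
      (Icc 0 (P * B₂ ^ 2 / (B₂ ^ 2 + B₁ ^ 2))) := fun p ⟨hp, hpP⟩ =>
    ⟨sub_nonneg.2 hpP, hcompl ▸ sub_le_sub_left hp P⟩
  exact ((jammingAmplitude_strictMonoOn hB₂ hB₁).comp_strictAntiOn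
    (fun _ _ _ _ h => sub_lt_sub_left h P) hreflect).congr
    fun p _ => jammingAmplitude_swap B₁ B₂ P p

end JammingAmplitude

section Rates

variable {a c L : ℝ}

lemma requiredJamPower_strictAntiOn (ha : 0 < a) (hL : 0 < L) :
    StrictAntiOn (requiredJamPower a c L) (Ioi 0) := by
  intro R hR S _ hRS
  have h1 : 1 < (2 : ℝ) ^ R := one_lt_rpow one_lt_two hR
  have h2 : (2 : ℝ) ^ R < 2 ^ S := rpow_lt_rpow_of_exponent_lt one_lt_two hRS
  unfold requiredJamPower
  gcongr

lemma requiredJamPower_logb (ha : 0 < a) (hL : 0 < L) {x : ℝ} (hx : 0 < L * x + c) :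
    requiredJamPower a c L (logb 2 (1 + a / (L * x + c))) = x := by
  rw [requiredJamPower, rpow_logb two_pos (by norm_num) (by positivity), add_sub_cancel_left,
    div_div_cancel₀ ha.ne', add_sub_cancel_right, mul_div_cancel_left₀ _ hL.ne']

lemma logb_one_add_div_pos (ha : 0 < a) {u : ℝ} (hu : 0 < u) : 0 < logb 2 (1 + a / u) :=
  logb_pos one_lt_two (lt_add_of_pos_right 1 (div_pos ha hu))

lemma mapsTo_requiredJamPower (ha : 0 < a) (hL : 0 < L) {x y : ℝ}
    (hx : 0 < L * x + c) (hy : 0 < L * y + c) :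
    MapsTo (requiredJamPower a c L)
      (Icc (logb 2 (1 + a / (L * y + c))) (logb 2 (1 + a / (L * x + c)))) (Icc x y) := by
  have hanti : AntitoneOn (requiredJamPower a c L)
      (Icc (logb 2 (1 + a / (L * y + c))) (logb 2 (1 + a / (L * x + c)))) :=
    (requiredJamPower_strictAntiOn ha hL).antitoneOn.mono
      fun R hR => (logb_one_add_div_pos ha hy).trans_le hR.1
  have hmaps := hanti.mapsTo_Icc
  rwa [requiredJamPower_logb ha hL hx, requiredJamPower_logb ha hL hy] at hmaps

lemma jammedRate_strictAntiOn (ha : 0 < a) (hc : 0 < c) : StrictAntiOn (jammedRate a c) (Ici 0) := by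
  intro s hs t _ hst
  have hsq : s ^ 2 < t ^ 2 := pow_lt_pow_left₀ hst hs two_ne_zero
  unfold jammedRate
  apply logb_lt_logb one_lt_two (by positivity)
  gcongr

end Rates

lemma minRate_eq_jammedRate {a₁ a₂ c₁ c₂ P B₁ B₂ L R : ℝ} (hL : 0 < L)
    (hR : 0 ≤ requiredJamPower a₁ c₁ L R) :
    logb 2 (1 + a₂ / ((√(a₁ / (2 ^ R - 1) - c₁) / √L * B₁ +
        √(P - (√(a₁ / (2 ^ R - 1) - c₁) / √L) ^ 2) * B₂) ^ 2 + c₂)) =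
      jammedRate a₂ c₂ (jammingAmplitude B₁ B₂ P (requiredJamPower a₁ c₁ L R)) := by
  rw [requiredJamPower] at hR ⊢
  rw [← sqrt_div' _ hL.le, sq_sqrt hR]
  rfl

/-- Proposition 2 of the paper: the lower boundary curve f_min is strictly decreasing on
[R₁^min, R₁^MRT2] and strictly increasing on [R₁^MRT2, R₁^max]. -/
theorem stmt12 (a₁ a₂ c₁ c₂ P B₁ B₂ L : ℝ)
    (ha₁ : 0 < a₁) (ha₂ : 0 < a₂) (hc₁ : 0 < c₁) (hc₂ : 0 < c₂)
    (hP : 0 < P) (hB₁ : 0 < B₁) (hB₂ : 0 < B₂) (hL : 0 < L) :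
    StrictAntiOn
      (fun R : ℝ => Real.logb 2 (1 + a₂ /
        (((Real.sqrt (a₁ / ((2 : ℝ) ^ R - 1) - c₁) / Real.sqrt L) * B₁ +
          Real.sqrt (P - (Real.sqrt (a₁ / ((2 : ℝ) ^ R - 1) - c₁) / Real.sqrt L) ^ 2) * B₂) ^ 2
          + c₂)))
      (Set.Icc (Real.logb 2 (1 + a₁ / (P * L + c₁)))
        (Real.logb 2 (1 + a₁ / (P * L * B₁ ^ 2 / (B₁ ^ 2 + B₂ ^ 2) + c₁)))) ∧
    StrictMonoOn
      (fun R : ℝ => Real.logb 2 (1 + a₂ /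
        (((Real.sqrt (a₁ / ((2 : ℝ) ^ R - 1) - c₁) / Real.sqrt L) * B₁ +
          Real.sqrt (P - (Real.sqrt (a₁ / ((2 : ℝ) ^ R - 1) - c₁) / Real.sqrt L) ^ 2) * B₂) ^ 2
          + c₂)))
      (Set.Icc (Real.logb 2 (1 + a₁ / (P * L * B₁ ^ 2 / (B₁ ^ 2 + B₂ ^ 2) + c₁)))
        (Real.logb 2 (1 + a₁ / c₁))) := by
  have hMRT : 0 ≤ P * B₁ ^ 2 / (B₁ ^ 2 + B₂ ^ 2) := by positivity
  have hfirst := mapsTo_requiredJamPower ha₁ hL (c := c₁) (x := P * B₁ ^ 2 / (B₁ ^ 2 + B₂ ^ 2))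
    (y := P) (by positivity) (by positivity)
  have hsecond := mapsTo_requiredJamPower ha₁ hL (c := c₁) (x := 0)
    (y := P * B₁ ^ 2 / (B₁ ^ 2 + B₂ ^ 2)) (by simpa using hc₁) (by positivity)
  have hMRTeq : L * (P * B₁ ^ 2 / (B₁ ^ 2 + B₂ ^ 2)) = P * L * B₁ ^ 2 / (B₁ ^ 2 + B₂ ^ 2) := by
    ring
  rw [hMRTeq, mul_comm L P] at hfirst
  rw [hMRTeq, mul_zero, zero_add] at hsecond
  have hjam : ∀ {u}, 0 < u → ∀ v,
      StrictAntiOn (requiredJamPower a₁ c₁ L) (Icc (logb 2 (1 + a₁ / u)) v) := fun hu _ =>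
    (requiredJamPower_strictAntiOn ha₁ hL).mono
      fun _ hR => (logb_one_add_div_pos ha₁ hu).trans_le hR.1
  constructor
  · exact (((jammedRate_strictAntiOn ha₂ hc₂).comp (jammingAmplitude_strictAntiOn hB₁.le hB₂)
      fun p _ => jammingAmplitude_nonneg hB₁.le hB₂.le p).comp_strictAntiOn
      (hjam (by positivity) _) hfirst).congr
      fun R hR => (minRate_eq_jammedRate hL (hMRT.trans (hfirst hR).1)).symm
  · exact (((jammedRate_strictAntiOn ha₂ hc₂).comp_strictMonoOn
      (jammingAmplitude_strictMonoOn hB₁ hB₂.le)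
      fun p _ => jammingAmplitude_nonneg hB₁.le hB₂.le p).comp
      (hjam (by positivity) _) hsecond).congr
      fun R hR => (minRate_eq_jammedRate hL (hsecond hR).1).symm
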